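/- For the circularly polarized Rabi problem, the explicit matrix function R(τ) whose columns are R₁ = (f² cos(τΩ) + (ν−1)², f(2(ν−1)cos τ sin²(τΩ/2) + Ω sin τ sin(τΩ)), f(2(ν−1) sin τ sin²(τΩ/2) − Ω cos τ sin(τΩ)))ᵀ/Ω², and the analogous R₂, R₃ given in the paper, satisfies dR/dτ = H(τ) R(τ) with R(0) = 1, where H(τ) is the antisymmetric matrix of the field h(τ) = (ν, f cos τ, f sin τ) and Ω = √(f² + (1−ν)²). -/

import Mathlib

/-!
In the frame rotating with the field about the first axis, `h(τ)` becomes the constant field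
`(ν - 1, f, 0)` of length `Ω`. Hence `R(τ) = Q(τ) S(τ)`, where `Q(τ)` is the rotation by `τ`
about the first axis and `S(τ) = exp (τ K)` with `K` the skew matrix of `(ν - 1, f, 0)`; since
`K³ = -Ω² K`, this exponential is given by Rodrigues' formula. Then `R' = Q (J + K) S`, where `J`
generates `Q`, and `J + K` is the skew matrix of `h(0)`, which `Q(τ)` conjugates to `H(τ)`.
-/

open Matrix Real

/-- The antisymmetric matrix of the circularly polarized field `h(τ) = (ν, f cos τ, f sin τ)`. -/
noncomputable def Hcirc (f ν τ : ℝ) : Matrix (Fin 3) (Fin 3) ℝ :=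
  !![0, -(f * Real.sin τ), f * Real.cos τ;
     f * Real.sin τ, 0, -ν;
     -(f * Real.cos τ), ν, 0]

/-- The explicit fundamental solution of the circularly polarized Rabi problem,
with columns `R₁, R₂, R₃` divided by `Ω²`, where `Ω = √(f² + (1−ν)²)`. -/
noncomputable def Rcirc (f ν τ : ℝ) : Matrix (Fin 3) (Fin 3) ℝ :=
  (Real.sqrt (f^2 + (1 - ν)^2) ^ 2)⁻¹ •
  (letI Ω := Real.sqrt (f^2 + (1 - ν)^2)
   !![f^2 * Real.cos (τ*Ω) + (ν - 1)^2,
        -(f*(ν - 1)*(Real.cos (τ*Ω) - 1)),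
        f*Ω*Real.sin (τ*Ω);
      f*(2*(ν - 1)*Real.cos τ*(Real.sin (τ*Ω/2))^2 + Ω*Real.sin τ*Real.sin (τ*Ω)),
        Real.cos τ*(f^2 + (ν - 1)^2*Real.cos (τ*Ω)) - (ν - 1)*Ω*Real.sin τ*Real.sin (τ*Ω),
        -(Ω*((ν - 1)*Real.cos τ*Real.sin (τ*Ω) + Ω*Real.sin τ*Real.cos (τ*Ω)));
      f*(2*(ν - 1)*Real.sin τ*(Real.sin (τ*Ω/2))^2 - Ω*Real.cos τ*Real.sin (τ*Ω)),
        Real.sin τ*(f^2 + (ν - 1)^2*Real.cos (τ*Ω)) + (ν - 1)*Ω*Real.cos τ*Real.sin (τ*Ω),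
        Ω*(Ω*Real.cos τ*Real.cos (τ*Ω) - (ν - 1)*Real.sin τ*Real.sin (τ*Ω))])

namespace Matrix

variable {𝕜 : Type*} [NontriviallyNormedField 𝕜] {m n p : Type*} [Fintype n]

theorem hasDerivAt_mul_apply {A : 𝕜 → Matrix m n 𝕜} {B : 𝕜 → Matrix n p 𝕜}
    {A' : Matrix m n 𝕜} {B' : Matrix n p 𝕜} {x : 𝕜}
    (hA : ∀ i j, HasDerivAt (fun t => A t i j) (A' i j) x)
    (hB : ∀ i j, HasDerivAt (fun t => B t i j) (B' i j) x) (i : m) (j : p) :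
    HasDerivAt (fun t => (A t * B t) i j) ((A' * B x + A x * B') i j) x := by
  simp only [mul_apply, add_apply, ← Finset.sum_add_distrib]
  exact HasDerivAt.fun_sum fun k _ => (hA i k).mul (hB k j)

end Matrix

def skewMatrix (a b c : ℝ) : Matrix (Fin 3) (Fin 3) ℝ :=
  !![0, -c, b; c, 0, -a; -b, a, 0]

theorem skewMatrix_add (a b c a' b' c' : ℝ) :
    skewMatrix a b c + skewMatrix a' b' c' = skewMatrix (a + a') (b + b') (c + c') := by
  ext i j
  fin_cases i <;> fin_cases j <;> simp [skewMatrix] <;> ring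

theorem skewMatrix_mul_self_mul_self (a b c : ℝ) :
    skewMatrix a b c * skewMatrix a b c * skewMatrix a b c
      = -(a ^ 2 + b ^ 2 + c ^ 2) • skewMatrix a b c := by
  ext i j
  fin_cases i <;> fin_cases j <;> simp [skewMatrix, mul_apply, Fin.sum_univ_three] <;> ring

noncomputable def xRotation (τ : ℝ) : Matrix (Fin 3) (Fin 3) ℝ :=
  !![1, 0, 0; 0, cos τ, -sin τ; 0, sin τ, cos τ]

theorem xRotation_zero : xRotation 0 = 1 := by
  ext i j
  fin_cases i <;> fin_cases j <;> simp [xRotation]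

theorem hasDerivAt_xRotation_apply (τ : ℝ) (i j : Fin 3) :
    HasDerivAt (fun t => xRotation t i j) ((xRotation τ * skewMatrix 1 0 0) i j) τ := by
  fin_cases i <;> fin_cases j <;>
    simp [xRotation, skewMatrix, mul_apply, Fin.sum_univ_three, hasDerivAt_const,
      hasDerivAt_sin, hasDerivAt_cos, (hasDerivAt_sin τ).fun_neg]

theorem skewMatrix_mul_xRotation (a b c τ : ℝ) :
    skewMatrix a (b * cos τ - c * sin τ) (b * sin τ + c * cos τ) * xRotation τ
      = xRotation τ * skewMatrix a b c := by
  ext i j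
  fin_cases i <;> fin_cases j <;> simp [skewMatrix, xRotation, mul_apply, Fin.sum_univ_three] <;>
    ring_nf <;> simp only [cos_sq'] <;> ring

section Rodrigues

variable {n : Type*} [Fintype n] [DecidableEq n] (K : Matrix n n ℝ) (ω : ℝ)

-- `exp (τ K)` whenever `K³ = -ω² K`.
noncomputable def rodrigues (τ : ℝ) : Matrix n n ℝ :=
  1 + (sin (τ * ω) / ω) • K + ((1 - cos (τ * ω)) / ω ^ 2) • (K * K)

theorem rodrigues_zero : rodrigues K ω 0 = 1 := by
  simp [rodrigues]

variable {K ω}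

theorem mul_rodrigues (hω : ω ≠ 0) (hK : K * K * K = -ω ^ 2 • K) (τ : ℝ) :
    K * rodrigues K ω τ = cos (τ * ω) • K + (sin (τ * ω) / ω) • (K * K) := by
  have hcoef : (1 - cos (τ * ω)) / ω ^ 2 * -ω ^ 2 = cos (τ * ω) - 1 := by
    field_simp
    ring
  rw [rodrigues, mul_add, mul_add, mul_one, mul_smul_comm, mul_smul_comm, ← mul_assoc, hK,
    smul_smul, hcoef]
  module

theorem hasDerivAt_rodrigues_apply (hω : ω ≠ 0) (hK : K * K * K = -ω ^ 2 • K) (τ : ℝ)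
    (i j : n) :
    HasDerivAt (fun t => rodrigues K ω t i j) ((K * rodrigues K ω τ) i j) τ := by
  have hsin : HasDerivAt (fun t => sin (t * ω) / ω) (cos (τ * ω)) τ := by
    refine (((hasDerivAt_mul_const ω).sin).div_const ω).congr_deriv ?_
    field_simp
  have hcos : HasDerivAt (fun t => (1 - cos (t * ω)) / ω ^ 2) (sin (τ * ω) / ω) τ := by
    refine ((((hasDerivAt_mul_const ω).cos).const_sub 1).div_const (ω ^ 2)).congr_deriv ?_
    field_simp
  have hentry : (fun t => rodrigues K ω t i j) = fun t => (1 : Matrix n n ℝ) i j +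
      (sin (t * ω) / ω * K i j + (1 - cos (t * ω)) / ω ^ 2 * (K * K) i j) := by
    funext t
    simp [rodrigues, add_assoc]
  rw [hentry, mul_rodrigues hω hK]
  exact (((hsin.mul_const (K i j)).add (hcos.mul_const ((K * K) i j))).const_add _).congr_deriv
    (by simp)

end Rodrigues

theorem Rcirc_eq_xRotation_mul_rodrigues {f ν : ℝ} (hΩ : √(f ^ 2 + (1 - ν) ^ 2) ≠ 0)
    (τ : ℝ) :
    Rcirc f ν τ =
      xRotation τ * rodrigues (skewMatrix (ν - 1) f 0) √(f ^ 2 + (1 - ν) ^ 2) τ := by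
  have hsq : √(f ^ 2 + (1 - ν) ^ 2) ^ 2 = f ^ 2 + (1 - ν) ^ 2 := sq_sqrt (by positivity)
  rw [Rcirc]
  generalize √(f ^ 2 + (1 - ν) ^ 2) = Ω at *
  have hhalf : sin (τ * Ω / 2) ^ 2 = (1 - cos (τ * Ω)) / 2 := by
    rw [sin_sq_eq_half_sub, show 2 * (τ * Ω / 2) = τ * Ω by ring]
    ring
  ext i j
  fin_cases i <;> fin_cases j <;>
    simp [xRotation, rodrigues, skewMatrix, mul_apply, Fin.sum_univ_three, one_apply, hhalf] <;>
    field_simp <;> ring_nf <;> simp only [hsq] <;> ring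

theorem Hcirc_mul_xRotation (f ν τ : ℝ) :
    Hcirc f ν τ * xRotation τ = xRotation τ * skewMatrix ν f 0 := by
  rw [← skewMatrix_mul_xRotation]
  congr 1
  simp [Hcirc, skewMatrix]

/-- The explicit matrix function solves `R' = H R` with `R(0) = 1`. -/
theorem stmt_13 (f ν : ℝ) (hΩ : Real.sqrt (f^2 + (1 - ν)^2) > 0) :
    (∀ τ : ℝ, ∀ i j, HasDerivAt (fun t => Rcirc f ν t i j)
        ((Hcirc f ν τ * Rcirc f ν τ) i j) τ) ∧
    Rcirc f ν 0 = 1 := by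
  have hK : skewMatrix (ν - 1) f 0 * skewMatrix (ν - 1) f 0 * skewMatrix (ν - 1) f 0
      = -√(f ^ 2 + (1 - ν) ^ 2) ^ 2 • skewMatrix (ν - 1) f 0 := by
    rw [skewMatrix_mul_self_mul_self, sq_sqrt (by positivity)]
    congr 2
    ring
  have hR := Rcirc_eq_xRotation_mul_rodrigues hΩ.ne'
  refine ⟨fun τ i j => ?_, by rw [hR, xRotation_zero, rodrigues_zero, one_mul]⟩
  simp only [hR]
  refine (Matrix.hasDerivAt_mul_apply (hasDerivAt_xRotation_apply τ)
    (hasDerivAt_rodrigues_apply hΩ.ne' hK τ) i j).congr_deriv ?_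
  rw [← mul_assoc (Hcirc f ν τ), Hcirc_mul_xRotation, ← mul_assoc (xRotation τ), ← add_mul,
    ← mul_add, skewMatrix_add, add_sub_cancel, zero_add, zero_add]
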